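/- Let ν⃗₁ ∈ ℝ^r have positive entries, W ∈ ℝ^{r×r} be a symmetric nonnegative matrix, and let μ⃗ : [0,∞) → ℝ^r solve μ⃗' = (ν⃗₁ − μ⃗) ⊙ W(ν⃗₁ − μ⃗), μ⃗(0) = 0, where ⊙ is the Hadamard (componentwise) product. Then 0 ≤ μ_k(t) ≤ ν_{1,k} for all k and all t ≥ 0, and each component μ_k is nondecreasing. -/

import Mathlib

/-!
Each gap `ν₁ₖ - μₖ` solves the scalar linear equation `y' = -(W (ν₁ - μ))ₖ · y` with `y(0) = ν₁ₖ > 0`,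
so by the integrating factor it stays positive. Then `μₖ' = (ν₁ₖ - μₖ) (W (ν₁ - μ))ₖ` is a product
of nonnegative factors, so `μₖ` is nondecreasing from `μₖ(0) = 0`.
-/

open Set

theorem exists_hasDerivAt_of_continuousOn_Ici {a : ℝ → ℝ} (ha : ContinuousOn a (Ici 0)) :
    ∃ G : ℝ → ℝ, ∀ t ≥ (0 : ℝ), HasDerivAt G (a t) t := by
  -- integrate the extension of `a` that is constant on `(-∞, 0]`
  have hcont : Continuous (a ∘ fun s => max s 0) :=
    ha.comp_continuous (continuous_id.max continuous_const) fun s => le_max_right s 0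
  refine ⟨fun t => ∫ s in (0 : ℝ)..t, a (max s 0), fun t ht => ?_⟩
  simpa [max_eq_left ht] using (hcont.integral_hasStrictDerivAt 0 t).hasDerivAt

theorem eq_mul_exp_of_hasDerivAt_mul_self {y a G : ℝ → ℝ}
    (hy : ∀ t ≥ (0 : ℝ), HasDerivAt y (a t * y t) t) (hG : ∀ t ≥ (0 : ℝ), HasDerivAt G (a t) t)
    {t : ℝ} (ht : 0 ≤ t) : y t = y 0 * Real.exp (G t - G 0) := by
  have hF : ∀ s ≥ (0 : ℝ), HasDerivAt (fun u => y u * Real.exp (-G u)) 0 s := fun s hs =>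
    ((hy s hs).mul ((hG s hs).neg.exp)).congr_deriv (by ring)
  have hconst := constant_of_has_deriv_right_zero (a := 0) (b := t)
    (fun x hx => (hF x hx.1).continuousAt.continuousWithinAt)
    (fun x hx => (hF x hx.1).hasDerivWithinAt) t ⟨ht, le_rfl⟩
  calc y t = y t * Real.exp (-G t) * Real.exp (G t) := by
        rw [mul_assoc, ← Real.exp_add, neg_add_cancel, Real.exp_zero, mul_one]
    _ = y 0 * Real.exp (G t - G 0) := by
        rw [hconst, mul_assoc, ← Real.exp_add, neg_add_eq_sub]

theorem pos_of_hasDerivAt_mul_self {y a : ℝ → ℝ} (ha : ContinuousOn a (Ici 0))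
    (hy : ∀ t ≥ (0 : ℝ), HasDerivAt y (a t * y t) t) (hy0 : 0 < y 0) {t : ℝ} (ht : 0 ≤ t) :
    0 < y t := by
  obtain ⟨G, hG⟩ := exists_hasDerivAt_of_continuousOn_Ici ha
  rw [eq_mul_exp_of_hasDerivAt_mul_self hy hG ht]
  positivity

theorem monotoneOn_Ici_of_hasDerivAt_nonneg {f f' : ℝ → ℝ} {a : ℝ}
    (hf : ∀ t ≥ a, HasDerivAt f (f' t) t) (hf' : ∀ t ≥ a, 0 ≤ f' t) : MonotoneOn f (Ici a) := by
  refine monotoneOn_of_hasDerivWithinAt_nonneg (f' := f') (convex_Ici a)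
    (fun t ht => (hf t ht).continuousAt.continuousWithinAt) (fun t ht => ?_) (fun t ht => ?_)
  · rw [interior_Ici] at ht
    exact (hf t ht.le).hasDerivWithinAt
  · rw [interior_Ici] at ht
    exact hf' t ht.le

theorem stmt_15_general (r : ℕ) (ν1 : Fin r → ℝ) (hν1 : ∀ k, 0 < ν1 k)
    (W : Matrix (Fin r) (Fin r) ℝ) (hW0 : ∀ i j, 0 ≤ W i j)
    (μ : ℝ → Fin r → ℝ) (h0 : μ 0 = 0)
    (hd : ∀ t ≥ (0:ℝ), ∀ k, HasDerivAt (fun s => μ s k)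
      ((ν1 k - μ t k) * ∑ j, W k j * (ν1 j - μ t j)) t) :
    (∀ t ≥ (0:ℝ), ∀ k, 0 ≤ μ t k ∧ μ t k ≤ ν1 k) ∧
    (∀ k, MonotoneOn (fun t => μ t k) (Set.Ici 0)) := by
  have hcoef : ∀ k, ContinuousOn (fun t => -∑ j, W k j * (ν1 j - μ t j)) (Ici 0) := fun k =>
    (continuousOn_finsetSum _ fun j _ => continuousOn_const.mul (continuousOn_const.sub
      fun t ht => (hd t ht j).continuousAt.continuousWithinAt)).neg
  have hgap : ∀ t ≥ (0:ℝ), ∀ k, 0 < ν1 k - μ t k := fun t ht k =>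
    pos_of_hasDerivAt_mul_self (y := fun s => ν1 k - μ s k) (hcoef k)
      (fun s hs => ((hd s hs k).const_sub (ν1 k)).congr_deriv (by ring))
      (by simpa [h0] using hν1 k) ht
  have hmono : ∀ k, MonotoneOn (fun t => μ t k) (Ici 0) := fun k =>
    monotoneOn_Ici_of_hasDerivAt_nonneg (fun t ht => hd t ht k) fun t ht =>
      mul_nonneg (hgap t ht k).le
        (Finset.sum_nonneg fun j _ => mul_nonneg (hW0 k j) (hgap t ht j).le)
  refine ⟨fun t ht k => ⟨?_, (sub_pos.mp (hgap t ht k)).le⟩, hmono⟩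
  simpa [h0] using hmono k self_mem_Ici ht ht

theorem stmt_15 (r : ℕ) (ν1 : Fin r → ℝ) (hν1 : ∀ k, 0 < ν1 k)
    (W : Matrix (Fin r) (Fin r) ℝ) (hWs : W.IsSymm) (hW0 : ∀ i j, 0 ≤ W i j)
    (μ : ℝ → Fin r → ℝ) (h0 : μ 0 = 0)
    (hd : ∀ t ≥ (0:ℝ), ∀ k, HasDerivAt (fun s => μ s k)
      ((ν1 k - μ t k) * ∑ j, W k j * (ν1 j - μ t j)) t) :
    (∀ t ≥ (0:ℝ), ∀ k, 0 ≤ μ t k ∧ μ t k ≤ ν1 k) ∧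
    (∀ k, MonotoneOn (fun t => μ t k) (Set.Ici 0)) :=
  stmt_15_general r ν1 hν1 W hW0 μ h0 hd
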